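/- With the data and maps D₄, D₃ as in the context, one has a + b ≥ 3 and the quotient ℚ-vector space ker D₃ / range D₄ has dimension a + b − 3. Consequently, the chain complex ℚ →(0) ℚ³ →(D₄) W →(D₃) U, placed in degrees 5, 4, 3, 2 (with zero differential out of degree 5), has homology of rank 1 in degree 5, rank 0 in degree 4, and rank a + b − 3 in degree 3; that is, the link L_x of a point x of the 0-dimensional stratum of a complex 3-dimensional compact toric variety satisfies rk H₅(L_x;ℚ) = 1, rk H₄(L_x;ℚ) = 0, and rk H₃(L_x;ℚ) = f₁ − 3, where f₁ = a + b is the number of 1-dimensional faces of the dual polytope having x as a proper face. -/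

import Mathlib

/-!
Since the rays span `ℚ³`, `∂₄` is injective: a vector in its kernel is orthogonal to every ray.
For a cycle of `∂₃`, the `s`-rows force `(x, y, z)` to be parallel to every `(n_i, m_i, l_i)`;
if `(x, y, z) ≠ 0` then `x ≠ 0 ≠ y`, so the `t`-rows rule out every `r_j`, and all rays would be
collinear. Hence `x = y = z = 0`, the `s`-rows reduce to `p_i = q_i`, and `ker ∂₃` has
dimension `a + b`.
-/

/-- Index set for the basis of `W = ℚ^(3+2a+b)`: the three basis vectors `x, y, z`,
then `p_1, …, p_a`, then `q_1, …, q_a`, then `r_1, …, r_b`. -/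
abbrev WIdx (a b : ℕ) : Type := (Fin 3 ⊕ Fin a) ⊕ (Fin a ⊕ Fin b)

/-- Index set for the basis of `U = ℚ^(1+3a+2b)`: the basis vector `w`, then the
`s_{i,k}` (`i ∈ Fin a`, `k ∈ Fin 3`), then the `t_{j,k}` (`j ∈ Fin b`, `k ∈ Fin 2`). -/
abbrev UIdx (a b : ℕ) : Type := Unit ⊕ ((Fin a × Fin 3) ⊕ (Fin b × Fin 2))

/-- The matrix of the cellular boundary operator `∂₄ : ℚ³ → W` of the CW structure on
the link of a point of the 0-dimensional stratum of a complex 3-dimensional toric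
variety: the `x`-, `y`-, `z`-rows vanish, the `p_i`- and `q_i`-rows are
`(n_i, m_i, l_i)`, and the `r_j`-rows are `(n'_j, m'_j, 0)`. -/
def M4 (a b : ℕ) (n m l : Fin a → ℤ) (n' m' : Fin b → ℤ) :
    Matrix (WIdx a b) (Fin 3) ℚ := fun i =>
  match i with
  | .inl (.inl _) => 0
  | .inl (.inr i) => ![((n i : ℤ) : ℚ), ((m i : ℤ) : ℚ), ((l i : ℤ) : ℚ)]
  | .inr (.inl i) => ![((n i : ℤ) : ℚ), ((m i : ℤ) : ℚ), ((l i : ℤ) : ℚ)]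
  | .inr (.inr j) => ![((n' j : ℤ) : ℚ), ((m' j : ℤ) : ℚ), 0]

/-- The matrix of the cellular boundary operator `∂₃ : W → U`: the `w`-row vanishes;
the `s_{i,1}`-row has `m_i·l_i` at `x`, `1` at `p_i`, `-1` at `q_i`;
the `s_{i,2}`-row has `n_i·l_i` at `y`, `1` at `p_i`, `-1` at `q_i`;
the `s_{i,3}`-row has `n_i·m_i` at `z`, `1` at `p_i`, `-1` at `q_i`;
the `t_{j,1}`-row has `-m'_j` at `x`; the `t_{j,2}`-row has `n'_j` at `y`. -/
def M3 (a b : ℕ) (n m l : Fin a → ℤ) (n' m' : Fin b → ℤ) :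
    Matrix (UIdx a b) (WIdx a b) ℚ := fun i j =>
  match i, j with
  | .inl _, _ => 0
  | .inr (.inl (i, k)), .inl (.inl c) =>
      if c = k then ![((m i * l i : ℤ) : ℚ), ((n i * l i : ℤ) : ℚ), ((n i * m i : ℤ) : ℚ)] k
      else 0
  | .inr (.inl (i, _)), .inl (.inr i') => if i' = i then 1 else 0
  | .inr (.inl (i, _)), .inr (.inl i') => if i' = i then -1 else 0
  | .inr (.inl _), .inr (.inr _) => 0
  | .inr (.inr (j, k)), .inl (.inl c) =>
      if k = 0 ∧ c = 0 then -((m' j : ℤ) : ℚ)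
      else if k = 1 ∧ c = 1 then ((n' j : ℤ) : ℚ) else 0
  | .inr (.inr _), _ => 0

theorem LinearMap.finrank_quotient_comap_range_add_finrank {K V W U : Type*} [DivisionRing K]
    [AddCommGroup V] [Module K V] [AddCommGroup W] [Module K W] [AddCommGroup U] [Module K U]
    [FiniteDimensional K W] (f : V →ₗ[K] W) (g : W →ₗ[K] U) (hf : LinearMap.ker f = ⊥)
    (hfg : LinearMap.range f ≤ LinearMap.ker g) :
    Module.finrank K (LinearMap.ker g ⧸ (LinearMap.range f).comap (LinearMap.ker g).subtype) +
      Module.finrank K V = Module.finrank K (LinearMap.ker g) := by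
  rw [← Submodule.finrank_quotient_add_finrank
      ((LinearMap.range f).comap (LinearMap.ker g).subtype),
    (Submodule.comapSubtypeEquivOfLe hfg).finrank_eq,
    LinearMap.finrank_range_of_inj (LinearMap.ker_eq_bot.mp hf)]

section Toric

open Matrix

variable {a b : ℕ} {n m l : Fin a → ℤ} {n' m' : Fin b → ℤ}

def rayGens (n m l : Fin a → ℤ) (n' m' : Fin b → ℤ) : Set (Fin 3 → ℚ) :=
  (Set.range fun i => ![((n i : ℤ) : ℚ), ((m i : ℤ) : ℚ), ((l i : ℤ) : ℚ)]) ∪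
    (Set.range fun j => ![((n' j : ℤ) : ℚ), ((m' j : ℤ) : ℚ), 0])

def xyzPart (w : WIdx a b → ℚ) : Fin 3 → ℚ := fun c => w (.inl (.inl c))

-- The cycles of `∂₃`: vanishing `x, y, z`-coordinates and `p_i = q_i`.
def cycleParam (a b : ℕ) : (Fin a ⊕ Fin b → ℚ) →ₗ[ℚ] (WIdx a b → ℚ) where
  toFun u
    | .inl (.inl _) => 0
    | .inl (.inr i) => u (.inl i)
    | .inr (.inl i) => u (.inl i)
    | .inr (.inr j) => u (.inr j)
  map_add' u v := by funext j; rcases j with (c | i) | (i | j) <;> simp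
  map_smul' c u := by funext j; rcases j with (c | i) | (i | j) <;> simp

theorem cycleParam_injective : Function.Injective (cycleParam a b) := by
  intro u v h
  funext s
  rcases s with i | j
  · exact congrFun h (.inl (.inr i))
  · exact congrFun h (.inr (.inr j))

theorem M4_mulVec_xyz (v : Fin 3 → ℚ) (c : Fin 3) :
    (M4 a b n m l n' m' *ᵥ v) (.inl (.inl c)) = 0 := by
  simp [Matrix.mulVec, M4]

theorem M4_mulVec_p (v : Fin 3 → ℚ) (i : Fin a) :
    (M4 a b n m l n' m' *ᵥ v) (.inl (.inr i)) = ![(n i : ℚ), (m i : ℚ), (l i : ℚ)] ⬝ᵥ v := rfl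

theorem M4_mulVec_r (v : Fin 3 → ℚ) (j : Fin b) :
    (M4 a b n m l n' m' *ᵥ v) (.inr (.inr j)) = ![(n' j : ℚ), (m' j : ℚ), 0] ⬝ᵥ v := rfl

theorem M3_mulVec_w (w : WIdx a b → ℚ) (u : Unit) : (M3 a b n m l n' m' *ᵥ w) (.inl u) = 0 := by
  simp [Matrix.mulVec, dotProduct, M3]

theorem M3_mulVec_s (w : WIdx a b → ℚ) (i : Fin a) (k : Fin 3) :
    (M3 a b n m l n' m' *ᵥ w) (.inr (.inl (i, k))) =
      ![(m i * l i : ℚ), (n i * l i : ℚ), (n i * m i : ℚ)] k * xyzPart w k +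
        w (.inl (.inr i)) - w (.inr (.inl i)) := by
  simp [Matrix.mulVec, dotProduct, Fintype.sum_sum_type, M3, xyzPart, ite_mul,
    Finset.sum_ite_eq', sub_eq_add_neg]

theorem M3_mulVec_t0 (w : WIdx a b → ℚ) (j : Fin b) :
    (M3 a b n m l n' m' *ᵥ w) (.inr (.inr (j, 0))) = -(m' j : ℚ) * xyzPart w 0 := by
  simp [Matrix.mulVec, dotProduct, Fintype.sum_sum_type, M3, xyzPart]

theorem M3_mulVec_t1 (w : WIdx a b → ℚ) (j : Fin b) :
    (M3 a b n m l n' m' *ᵥ w) (.inr (.inr (j, 1))) = (n' j : ℚ) * xyzPart w 1 := by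
  simp [Matrix.mulVec, dotProduct, Fintype.sum_sum_type, M3, xyzPart]

theorem M3_mulVec_eq_zero_of_xyzPart_eq_zero {w : WIdx a b → ℚ} (hxyz : xyzPart w = 0)
    (hpq : ∀ i, w (.inl (.inr i)) = w (.inr (.inl i))) : M3 a b n m l n' m' *ᵥ w = 0 := by
  funext u
  rcases u with u | (⟨i, k⟩ | ⟨j, k⟩)
  · exact M3_mulVec_w w u
  · simp [M3_mulVec_s, hxyz, hpq]
  · fin_cases k
    · simp [M3_mulVec_t0, hxyz]
    · simp [M3_mulVec_t1, hxyz]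

theorem range_M4_le_ker_M3 :
    LinearMap.range (Matrix.toLin' (M4 a b n m l n' m')) ≤
      LinearMap.ker (Matrix.toLin' (M3 a b n m l n' m')) := by
  rintro _ ⟨v, rfl⟩
  exact M3_mulVec_eq_zero_of_xyzPart_eq_zero (funext fun c => M4_mulVec_xyz v c) fun i => rfl

theorem ker_M4_eq_bot (hspan : Submodule.span ℚ (rayGens n m l n' m') = ⊤) :
    LinearMap.ker (toLin' (M4 a b n m l n' m')) = ⊥ := by
  refine (Submodule.eq_bot_iff _).mpr fun v hv => ?_
  rw [LinearMap.mem_ker, toLin'_apply] at hv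
  have hgens : rayGens n m l n' m' ⊆ LinearMap.ker (dotProductEquiv ℚ (Fin 3) v) := by
    rintro u (⟨i, rfl⟩ | ⟨j, rfl⟩) <;> simp only [SetLike.mem_coe, LinearMap.mem_ker,
      dotProductEquiv_apply_apply, dotProduct_comm v]
    · rw [← M4_mulVec_p, hv, Pi.zero_apply]
    · rw [← M4_mulVec_r, hv, Pi.zero_apply]
  have hle := Submodule.span_le.mpr hgens
  rw [hspan] at hle
  exact dotProduct_self_eq_zero.mp (hle (Submodule.mem_top (x := v)))

theorem pos_of_span_rayGens_eq_top (hspan : Submodule.span ℚ (rayGens n m l n' m') = ⊤) :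
    0 < a := by
  refine Nat.pos_of_ne_zero fun ha => ?_
  subst ha
  have hgens : rayGens n m l n' m' ⊆
      LinearMap.ker (LinearMap.proj (R := ℚ) (φ := fun _ : Fin 3 => ℚ) 2) := by
    rintro u (⟨i, rfl⟩ | ⟨j, rfl⟩)
    · exact i.elim0
    · simp
  have hle := Submodule.span_le.mpr hgens
  rw [hspan] at hle
  simpa using hle (Submodule.mem_top (x := Pi.single 2 1))

theorem smul_xyzPart_of_M3_mulVec_eq_zero (hm : ∀ i, m i ≠ 0) (hl : ∀ i, l i ≠ 0)
    {w : WIdx a b → ℚ} (hw : M3 a b n m l n' m' *ᵥ w = 0) (i : Fin a) :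
    (n i : ℚ) • xyzPart w = xyzPart w 0 • ![(n i : ℚ), (m i : ℚ), (l i : ℚ)] := by
  have hs (k : Fin 3) := (M3_mulVec_s w i k).symm.trans (congrFun hw _)
  have hs0 := hs 0
  have hs1 := hs 1
  have hs2 := hs 2
  simp only [Pi.zero_apply, cons_val_zero, cons_val_one, cons_val_two, tail_cons, head_cons]
    at hs0 hs1 hs2
  have hxy : (l i : ℚ) * (n i * xyzPart w 1 - m i * xyzPart w 0) = 0 := by
    linear_combination hs1 - hs0
  have hxz : (m i : ℚ) * (n i * xyzPart w 2 - l i * xyzPart w 0) = 0 := by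
    linear_combination hs2 - hs0
  replace hxy := (mul_eq_zero.mp hxy).resolve_left (Int.cast_ne_zero.mpr (hl i))
  replace hxz := (mul_eq_zero.mp hxz).resolve_left (Int.cast_ne_zero.mpr (hm i))
  ext k
  fin_cases k <;> simp only [Fin.reduceFinMk, Fin.isValue, Pi.smul_apply, smul_eq_mul, cons_val]
  · ring
  · linear_combination hxy
  · linear_combination hxz

theorem xyzPart_eq_zero_of_M3_mulVec_eq_zero (hn : ∀ i, n i ≠ 0) (hm : ∀ i, m i ≠ 0)
    (hl : ∀ i, l i ≠ 0) (hnm' : ∀ j, ¬(n' j = 0 ∧ m' j = 0))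
    (hspan : Submodule.span ℚ (rayGens n m l n' m') = ⊤)
    {w : WIdx a b → ℚ} (hw : M3 a b n m l n' m' *ᵥ w = 0) : xyzPart w = 0 := by
  have hpar := smul_xyzPart_of_M3_mulVec_eq_zero hm hl hw
  set X := xyzPart w
  have hnQ (i : Fin a) : (n i : ℚ) ≠ 0 := Int.cast_ne_zero.mpr (hn i)
  obtain ⟨i₀⟩ : Nonempty (Fin a) := ⟨⟨0, pos_of_span_rayGens_eq_top hspan⟩⟩
  suffices hx : X 0 = 0 by
    have h₀ := hpar i₀
    rw [hx, zero_smul] at h₀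
    exact (smul_eq_zero.mp h₀).resolve_left (hnQ i₀)
  by_contra hx
  have hy : X 1 ≠ 0 := by
    have h₁ : (n i₀ : ℚ) * X 1 = X 0 * m i₀ := by simpa using congrFun (hpar i₀) 1
    exact fun hy => mul_ne_zero hx (Int.cast_ne_zero.mpr (hm i₀)) (by rw [← h₁, hy, mul_zero])
  have hgens : rayGens n m l n' m' ⊆ Submodule.span ℚ {X} := by
    rintro u (⟨i, rfl⟩ | ⟨j, rfl⟩)
    · refine Submodule.mem_span_singleton.mpr ⟨(X 0)⁻¹ * n i, ?_⟩
      rw [mul_smul, hpar i, smul_smul, inv_mul_cancel₀ hx, one_smul]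
    · have ht0 := (M3_mulVec_t0 w j).symm.trans (congrFun hw _)
      have ht1 := (M3_mulVec_t1 w j).symm.trans (congrFun hw _)
      refine absurd ⟨?_, ?_⟩ (hnm' j)
      · exact_mod_cast (mul_eq_zero.mp ht1).resolve_right hy
      · exact_mod_cast neg_eq_zero.mp ((mul_eq_zero.mp ht0).resolve_right hx)
  have hle := Submodule.finrank_mono (Submodule.span_le.mpr hgens)
  rw [hspan, finrank_top, Module.finrank_fin_fun,
    finrank_span_singleton fun h => hx (congrFun h 0)] at hle
  omega

theorem ker_M3_eq_range_cycleParam (hn : ∀ i, n i ≠ 0) (hm : ∀ i, m i ≠ 0)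
    (hl : ∀ i, l i ≠ 0) (hnm' : ∀ j, ¬(n' j = 0 ∧ m' j = 0))
    (hspan : Submodule.span ℚ (rayGens n m l n' m') = ⊤) :
    LinearMap.ker (toLin' (M3 a b n m l n' m')) = LinearMap.range (cycleParam a b) := by
  ext w
  rw [LinearMap.mem_ker, toLin'_apply, LinearMap.mem_range]
  constructor
  · intro hw
    have hxyz := xyzPart_eq_zero_of_M3_mulVec_eq_zero hn hm hl hnm' hspan hw
    have hpq (i : Fin a) : w (.inr (.inl i)) = w (.inl (.inr i)) := by
      have hs := (M3_mulVec_s w i 0).symm.trans (congrFun hw _)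
      simp only [hxyz, Pi.zero_apply, mul_zero, zero_add] at hs
      linarith
    refine ⟨fun | .inl i => w (.inl (.inr i)) | .inr j => w (.inr (.inr j)), funext ?_⟩
    rintro ((c | i) | (i | j))
    · exact (congrFun hxyz c).symm
    · rfl
    · exact (hpq i).symm
    · rfl
  · rintro ⟨u, rfl⟩
    exact M3_mulVec_eq_zero_of_xyzPart_eq_zero rfl fun i => rfl

theorem finrank_ker_M3 (hn : ∀ i, n i ≠ 0) (hm : ∀ i, m i ≠ 0)
    (hl : ∀ i, l i ≠ 0) (hnm' : ∀ j, ¬(n' j = 0 ∧ m' j = 0))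
    (hspan : Submodule.span ℚ (rayGens n m l n' m') = ⊤) :
    Module.finrank ℚ (LinearMap.ker (toLin' (M3 a b n m l n' m'))) = a + b := by
  rw [ker_M3_eq_range_cycleParam hn hm hl hnm' hspan,
    LinearMap.finrank_range_of_inj cycleParam_injective]
  simp

end Toric

/-- With `∂₄` and `∂₃` the cellular boundary operators, one has `a + b ≥ 3` and
`dim (ker ∂₃ / im ∂₄) = a + b − 3`.  Consequently the chain complex
`ℚ → ℚ³ → W → U` in degrees `5, 4, 3, 2` (with zero differential out of degree 5)
has homology of rank `1` in degree `5`, `0` in degree `4`, and `a + b − 3 = f₁ − 3`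
in degree `3`: the link of a point of the 0-dimensional stratum of a complex
3-dimensional compact toric variety satisfies `rk H₅ = 1`, `rk H₄ = 0`,
`rk H₃ = f₁ − 3`. -/
theorem stmt7 (a b : ℕ) (n m l : Fin a → ℤ) (n' m' : Fin b → ℤ)
    (hn : ∀ i, n i ≠ 0) (hm : ∀ i, m i ≠ 0) (hl : ∀ i, l i ≠ 0)
    (hnm' : ∀ j, ¬(n' j = 0 ∧ m' j = 0))
    (hspan : Submodule.span ℚ
        ((Set.range fun i => ![((n i : ℤ) : ℚ), ((m i : ℤ) : ℚ), ((l i : ℤ) : ℚ)]) ∪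
          (Set.range fun j => ![((n' j : ℤ) : ℚ), ((m' j : ℤ) : ℚ), 0])) = ⊤) :
    3 ≤ a + b ∧
    -- rank of the homology in degree 5: the kernel of the zero differential on `ℚ`
    Module.finrank ℚ (LinearMap.ker (0 : ℚ →ₗ[ℚ] (Fin 3 → ℚ))) = 1 ∧
    -- rank of the homology in degree 4: `ker ∂₄` (the incoming differential is zero)
    Module.finrank ℚ (LinearMap.ker (Matrix.toLin' (M4 a b n m l n' m'))) = 0 ∧
    -- rank of the homology in degree 3: `ker ∂₃ / im ∂₄`
    Module.finrank ℚ
      (LinearMap.ker (Matrix.toLin' (M3 a b n m l n' m')) ⧸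
        (LinearMap.range (Matrix.toLin' (M4 a b n m l n' m'))).comap
          (LinearMap.ker (Matrix.toLin' (M3 a b n m l n' m'))).subtype)
      = a + b - 3 := by
  have hker4 := ker_M4_eq_bot hspan
  have hdim := LinearMap.finrank_quotient_comap_range_add_finrank _ _ hker4 range_M4_le_ker_M3
  rw [finrank_ker_M3 hn hm hl hnm' hspan, Module.finrank_fin_fun] at hdim
  refine ⟨by omega, ?_, by rw [hker4, finrank_bot], by omega⟩
  rw [LinearMap.ker_zero, finrank_top, Module.finrank_self]
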